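/- Let n ≥ 2 and let V₁, …, Vₙ be an admissible family on H = ℓ²(ℕⁿ; ℂ). Then S := ran V₁ + ⋯ + ran Vₙ is a closed subspace of H, is invariant under every shift Sᵢ, and the orthogonal projection onto S is P_S = I − (I − V₁V₁*)(I − V₂V₂*)⋯(I − VₙVₙ*); equivalently the orthogonal projection onto the quotient module Q = S^⊥ is ∏ᵢ (I − VᵢVᵢ*). -/

import Mathlib

open ContinuousLinearMap

noncomputable section

/-- `ℓ²(ℕⁿ; ℂ)`, identified with the Hardy space `H²(𝔻ⁿ)` via Taylor coefficients. -/
abbrev HardyH (n : ℕ) : Type := lp (fun _ : Fin n → ℕ => ℂ) 2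

/-- `T` is the `i`-th coordinate unilateral shift (multiplication by `zᵢ` on `H²(𝔻ⁿ)`):
`(T f) α = f (α − εᵢ)` if `αᵢ ≥ 1`, and `0` otherwise. -/
def IsShift (n : ℕ) (i : Fin n) (T : HardyH n →L[ℂ] HardyH n) : Prop :=
  ∀ (f : HardyH n) (α : Fin n → ℕ),
    T f α = if 0 < α i then f (α - Pi.single i 1) else 0

/-- The standard basis vector at the zero multi-index (the constant function `1`). -/
def e₀ (n : ℕ) : HardyH n := lp.single 2 0 1

/-- `V` is a variable-`i` inner multiplier: an isometry commuting with every shift and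
with the adjoints of the shifts in all the other variables (these are exactly the
multiplication operators by one-variable inner functions `Θ(zᵢ)`). -/
def IsInnerMult (n : ℕ) (i : Fin n) (Sh : Fin n → HardyH n →L[ℂ] HardyH n)
    (V : HardyH n →L[ℂ] HardyH n) : Prop :=
  adjoint V * V = 1 ∧ (∀ j, V * Sh j = Sh j * V) ∧
    ∀ j, j ≠ i → V * adjoint (Sh j) = adjoint (Sh j) * V

/-- An admissible family: `Sh` are the coordinate shifts, each `V i` is a variable-`i`
inner multiplier, and the `V i` doubly commute with each other. -/
def IsAdmissible {n : ℕ} (Sh V : Fin n → HardyH n →L[ℂ] HardyH n) : Prop :=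
  (∀ i, IsShift n i (Sh i)) ∧ (∀ i, IsInnerMult n i Sh (V i)) ∧
  (∀ i j, i ≠ j → V i * V j = V j * V i) ∧
  (∀ i j, i ≠ j → adjoint (V i) * V j = V j * adjoint (V i))

/-!
Each `Pᵢ = VᵢVᵢ*` is the orthogonal projection onto `ran Vᵢ`, and double commutation of the `Vᵢ`
makes the `Pᵢ` commute. For commuting idempotents `p, q` one has
`ran (1 - (1 - p)(1 - q)) = ran p + ran q`, so by induction `E = 1 - ∏ᵢ (1 - Pᵢ)` is a self-adjoint
idempotent with range `∑ᵢ ran Vᵢ`. Hence this sum is closed, and its orthogonal complement is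
`ker E = ran ∏ᵢ (1 - Pᵢ)`. Shift invariance holds because every `Sᵢ` commutes with every `Vⱼ`.
-/

theorem IsIdempotentElem.list_prod {M : Type*} [Monoid M] {l : List M}
    (h : ∀ p ∈ l, IsIdempotentElem p) (hl : l.Pairwise Commute) : IsIdempotentElem l.prod := by
  induction l with
  | nil => exact .one
  | cons a l ih =>
    rw [List.pairwise_cons] at hl
    rw [List.prod_cons]
    exact .mul_of_commute (Commute.list_prod_right l a hl.1) (h a List.mem_cons_self)
      (ih (fun p hp => h p (List.mem_cons_of_mem a hp)) hl.2)

theorem IsStarProjection.list_prod {R : Type*} [Semiring R] [StarRing R] {l : List R}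
    (h : ∀ p ∈ l, IsStarProjection p) (hl : l.Pairwise Commute) : IsStarProjection l.prod := by
  induction l with
  | nil => exact .one R
  | cons a l ih =>
    rw [List.pairwise_cons] at hl
    rw [List.prod_cons]
    exact (h a List.mem_cons_self).mul (ih (fun p hp => h p (List.mem_cons_of_mem a hp)) hl.2)
      (Commute.list_prod_right l a hl.1)

theorem IsStarProjection.mul_star_self_of_star_mul_self {R : Type*} [Monoid R] [StarMul R] {v : R}
    (hv : star v * v = 1) : IsStarProjection (v * star v) where
  isIdempotentElem := by rw [IsIdempotentElem, mul_assoc, ← mul_assoc (star v), hv, one_mul]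
  isSelfAdjoint := by rw [IsSelfAdjoint, star_mul, star_star]

theorem Commute.mul_star_self_of_commute_star {R : Type*} [Monoid R] [StarMul R] {a b : R}
    (h : Commute a b) (h' : Commute (star a) b) : Commute (a * star a) (b * star b) := by
  have h'' : Commute a (star b) := by simpa using h'.star_star
  exact (h.mul_right h'').mul_left (h'.mul_right h.star_star)

theorem Commute.one_sub_one_sub {R : Type*} [Ring R] {a b : R} (h : Commute a b) :
    Commute (1 - a) (1 - b) :=
  (Commute.one_left _).sub_left ((Commute.one_right a).sub_right h)

namespace Module.End

section Semiring

variable {R M : Type*} [Semiring R] [AddCommMonoid M] [Module R M]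

theorem range_mul_of_mul_eq_one {a b : End R M} (h : b * a = 1) :
    LinearMap.range (a * b) = LinearMap.range a :=
  LinearMap.range_comp_of_range_eq_top a
    (LinearMap.range_eq_top.mpr (Function.RightInverse.surjective (fun x => congr($h x))))

theorem range_mem_invtSubmodule_of_commute {T f : End R M} (h : Commute T f) :
    LinearMap.range f ∈ T.invtSubmodule := by
  rw [mem_invtSubmodule_iff_forall_mem_of_mem]
  rintro _ ⟨x, rfl⟩
  exact ⟨T x, congr($h.symm x)⟩

theorem sum_mem_invtSubmodule {ι : Type*} {T : End R M} {s : Finset ι} {p : ι → Submodule R M}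
    (h : ∀ i ∈ s, p i ∈ T.invtSubmodule) : ∑ i ∈ s, p i ∈ T.invtSubmodule :=
  Finset.sum_induction p (· ∈ T.invtSubmodule)
    (fun a b ha hb => by rw [Submodule.add_eq_sup]; exact invtSubmodule.sup_mem ha hb)
    (by simp) h

end Semiring

section Ring

variable {R M : Type*} [Ring R] [AddCommGroup M] [Module R M]

theorem range_one_sub_mul_one_sub {p q : End R M} (hp : IsIdempotentElem p)
    (hq : IsIdempotentElem q) (hpq : Commute p q) :
    LinearMap.range (1 - (1 - p) * (1 - q)) = LinearMap.range p + LinearMap.range q := by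
  have hsplit : 1 - (1 - p) * (1 - q) = p + q * (1 - p) := by
    rw [mul_sub, sub_mul, sub_mul, hpq.eq]; noncomm_ring
  have hfix_p : (1 - (1 - p) * (1 - q)) * p = p := by
    rw [sub_mul, mul_assoc, ← ((Commute.one_right p).sub_right hpq).eq, ← mul_assoc,
      hp.one_sub_mul_self]
    simp
  have hfix_q : (1 - (1 - p) * (1 - q)) * q = q := by
    rw [sub_mul, mul_assoc, hq.one_sub_mul_self]
    simp
  apply le_antisymm
  · rintro _ ⟨x, rfl⟩
    rw [hsplit, Submodule.add_eq_sup]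
    exact Submodule.mem_sup.mpr ⟨p x, ⟨x, rfl⟩, q ((1 - p) x), ⟨_, rfl⟩, rfl⟩
  · rw [Submodule.add_eq_sup, sup_le_iff]
    constructor
    · nth_rewrite 1 [← hfix_p]; exact LinearMap.range_comp_le_range _ _
    · nth_rewrite 1 [← hfix_q]; exact LinearMap.range_comp_le_range _ _

theorem range_one_sub_prod_ofFn_one_sub {n : ℕ} {p : Fin n → End R M}
    (hp : ∀ i, IsIdempotentElem (p i)) (hpp : ∀ i j, Commute (p i) (p j)) :
    LinearMap.range (1 - (List.ofFn fun i => 1 - p i).prod) = ∑ i, LinearMap.range (p i) := by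
  induction n with
  | zero => simp
  | succ n ih =>
    set q := (List.ofFn fun i : Fin n => 1 - p i.succ).prod
    have hq : IsIdempotentElem q :=
      .list_prod (List.forall_mem_ofFn_iff.mpr fun i => (hp i.succ).one_sub)
        (List.pairwise_ofFn.mpr fun i j _ => (hpp i.succ j.succ).one_sub_one_sub)
    have hpq : Commute (p 0) (1 - q) :=
      (Commute.one_right _).sub_right <| Commute.list_prod_right _ _ <|
        List.forall_mem_ofFn_iff.mpr fun i => (Commute.one_right _).sub_right (hpp 0 i.succ)
    rw [List.ofFn_succ, List.prod_cons, Fin.sum_univ_succ,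
      ← ih (fun i => hp i.succ) (fun i j => hpp i.succ j.succ),
      ← range_one_sub_mul_one_sub (hp 0) hq.one_sub hpq, sub_sub_cancel]

end Ring

end Module.End

namespace ContinuousLinearMap

theorem range_one_sub_prod_ofFn_one_sub {R M : Type*} [Ring R] [TopologicalSpace M]
    [AddCommGroup M] [IsTopologicalAddGroup M] [Module R M] {n : ℕ} {p : Fin n → M →L[R] M}
    (hp : ∀ i, IsIdempotentElem (p i)) (hpp : ∀ i j, Commute (p i) (p j)) :
    LinearMap.range ((1 - (List.ofFn fun i => 1 - p i).prod : M →L[R] M) : M →ₗ[R] M) =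
      ∑ i, LinearMap.range (p i : M →ₗ[R] M) := by
  have hcoe : ((1 - (List.ofFn fun i => 1 - p i).prod : M →L[R] M) : M →ₗ[R] M) =
      1 - (List.ofFn fun i => 1 - (p i : M →ₗ[R] M)).prod := by
    change toLinearMapRingHom (1 - (List.ofFn fun i => 1 - p i).prod) = _
    rw [map_sub, map_one, map_list_prod, List.map_ofFn]
    rfl
  rw [hcoe]
  exact Module.End.range_one_sub_prod_ofFn_one_sub (fun i => (hp i).toLinearMap)
    (fun i j => (hpp i j).map toLinearMapRingHom)

theorem IsStarProjection.range_eq_orthogonal_range_one_sub {𝕜 E : Type*} [RCLike 𝕜]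
    [NormedAddCommGroup E] [InnerProductSpace 𝕜 E] [CompleteSpace E] {p : E →L[𝕜] E}
    (hp : IsStarProjection p) :
    LinearMap.range (p : E →ₗ[𝕜] E) = (LinearMap.range ((1 - p : E →L[𝕜] E) : E →ₗ[𝕜] E))ᗮ := by
  rw [IsStarNormal.orthogonal_range hp.one_sub.isStarNormal]
  exact LinearMap.IsIdempotentElem.range_eq_ker_one_sub hp.isIdempotentElem.toLinearMap

end ContinuousLinearMap

theorem projection_onto_co_doubly_commuting_submodule_general
    {n : ℕ} (Sh V : Fin n → HardyH n →L[ℂ] HardyH n)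
    (hadm : IsAdmissible Sh V) :
    IsClosed ((∑ i, LinearMap.range (V i : HardyH n →ₗ[ℂ] HardyH n) : Submodule ℂ (HardyH n)) : Set (HardyH n)) ∧
    (∀ i, ∀ x ∈ (∑ i, LinearMap.range (V i : HardyH n →ₗ[ℂ] HardyH n) : Submodule ℂ (HardyH n)),
      Sh i x ∈ (∑ i, LinearMap.range (V i : HardyH n →ₗ[ℂ] HardyH n) : Submodule ℂ (HardyH n))) ∧
    IsSelfAdjoint (1 - (List.ofFn fun i => 1 - V i * adjoint (V i)).prod) ∧
    (1 - (List.ofFn fun i => 1 - V i * adjoint (V i)).prod)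
        * (1 - (List.ofFn fun i => 1 - V i * adjoint (V i)).prod)
      = 1 - (List.ofFn fun i => 1 - V i * adjoint (V i)).prod ∧
    LinearMap.range ((1 - (List.ofFn fun i => 1 - V i * adjoint (V i)).prod :
      HardyH n →L[ℂ] HardyH n) : HardyH n →ₗ[ℂ] HardyH n)
      = ∑ i, LinearMap.range (V i : HardyH n →ₗ[ℂ] HardyH n) ∧
    LinearMap.range (((List.ofFn fun i => 1 - V i * adjoint (V i)).prod :
      HardyH n →L[ℂ] HardyH n) : HardyH n →ₗ[ℂ] HardyH n)
      = (∑ i, LinearMap.range (V i : HardyH n →ₗ[ℂ] HardyH n) : Submodule ℂ (HardyH n))ᗮ := by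
  obtain ⟨-, hV, hVV, hVV'⟩ := hadm
  have hP : ∀ i, IsStarProjection (V i * adjoint (V i)) := fun i => by
    simpa only [star_eq_adjoint] using IsStarProjection.mul_star_self_of_star_mul_self
      (v := V i) (by rw [star_eq_adjoint]; exact (hV i).1)
  have hPP : ∀ i j, Commute (V i * adjoint (V i)) (V j * adjoint (V j)) := by
    intro i j
    rcases eq_or_ne i j with rfl | hij
    · exact Commute.refl _
    · simpa only [star_eq_adjoint] using Commute.mul_star_self_of_commute_star (hVV i j hij)
        (by rw [star_eq_adjoint]; exact hVV' i j hij)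
  set Q := (List.ofFn fun i => 1 - V i * adjoint (V i)).prod
  have hQ : IsStarProjection Q := .list_prod (List.forall_mem_ofFn_iff.mpr fun i => (hP i).one_sub)
    (List.pairwise_ofFn.mpr fun i j _ => (hPP i j).one_sub_one_sub)
  have hrange : LinearMap.range ((1 - Q : HardyH n →L[ℂ] HardyH n) : HardyH n →ₗ[ℂ] HardyH n) =
      ∑ i, LinearMap.range (V i : HardyH n →ₗ[ℂ] HardyH n) := by
    rw [range_one_sub_prod_ofFn_one_sub (fun i => (hP i).isIdempotentElem) hPP]
    exact Finset.sum_congr rfl fun i _ =>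
      Module.End.range_mul_of_mul_eq_one congr(toLinearMapRingHom $((hV i).1))
  refine ⟨hrange ▸ hQ.one_sub.isIdempotentElem.isClosed_range, fun i => ?_,
    hQ.one_sub.isSelfAdjoint, hQ.one_sub.isIdempotentElem, hrange,
    hrange ▸ hQ.range_eq_orthogonal_range_one_sub⟩
  refine (Module.End.mem_invtSubmodule_iff_forall_mem_of_mem _).mp <|
    Module.End.sum_mem_invtSubmodule fun j _ => Module.End.range_mem_invtSubmodule_of_commute ?_
  exact congr(toLinearMapRingHom $((hV j).2.1 i)).symm

/-- For an admissible family `V₁, …, Vₙ`, the subspace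
`S = ran V₁ + ⋯ + ran Vₙ` is closed and invariant under every shift, and the orthogonal
projection onto `S` is `I − (I − V₁V₁*)⋯(I − VₙVₙ*)` (expressed by: this operator is
self-adjoint, idempotent, with range `S`); equivalently the projection onto the quotient
module `Q = Sᗮ` is `∏ᵢ (I − VᵢVᵢ*)`, whose range is `Sᗮ`. -/
theorem projection_onto_co_doubly_commuting_submodule
    {n : ℕ} (hn : 2 ≤ n) (Sh V : Fin n → HardyH n →L[ℂ] HardyH n)
    (hadm : IsAdmissible Sh V) :
    IsClosed ((∑ i, LinearMap.range (V i : HardyH n →ₗ[ℂ] HardyH n) : Submodule ℂ (HardyH n)) : Set (HardyH n)) ∧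
    (∀ i, ∀ x ∈ (∑ i, LinearMap.range (V i : HardyH n →ₗ[ℂ] HardyH n) : Submodule ℂ (HardyH n)),
      Sh i x ∈ (∑ i, LinearMap.range (V i : HardyH n →ₗ[ℂ] HardyH n) : Submodule ℂ (HardyH n))) ∧
    IsSelfAdjoint (1 - (List.ofFn fun i => 1 - V i * adjoint (V i)).prod) ∧
    (1 - (List.ofFn fun i => 1 - V i * adjoint (V i)).prod)
        * (1 - (List.ofFn fun i => 1 - V i * adjoint (V i)).prod)
      = 1 - (List.ofFn fun i => 1 - V i * adjoint (V i)).prod ∧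
    LinearMap.range ((1 - (List.ofFn fun i => 1 - V i * adjoint (V i)).prod :
      HardyH n →L[ℂ] HardyH n) : HardyH n →ₗ[ℂ] HardyH n)
      = ∑ i, LinearMap.range (V i : HardyH n →ₗ[ℂ] HardyH n) ∧
    LinearMap.range (((List.ofFn fun i => 1 - V i * adjoint (V i)).prod :
      HardyH n →L[ℂ] HardyH n) : HardyH n →ₗ[ℂ] HardyH n)
      = (∑ i, LinearMap.range (V i : HardyH n →ₗ[ℂ] HardyH n) : Submodule ℂ (HardyH n))ᗮ :=
  projection_onto_co_doubly_commuting_submodule_general Sh V hadm
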